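/- Let n ≥ 1, d ≥ 2 and k ∈ {1,…,d−1} be integers, let p₁,…,pₙ ∈ ℝ^d, and let t > 0. Define G_t and the domain D as follows: G_t(X,y) := t·∑_{i=1}^n yᵢ − ∑_{i=1}^n ln(yᵢ² − ‖X pᵢ‖₂²) − ln det(X) − ln det(I_d − X), and D is the set of pairs (X,y) with X ∈ ℝ^{d×d} symmetric, trace(X) = d−k, 0 ≺ X ≺ I_d, and ‖X pᵢ‖₂ < yᵢ for every i. Let X₀ := ((d−k)/d)·I_d and let y₀ ∈ ℝ^n have entries (y₀)ᵢ := √(‖X₀ pᵢ‖₂² + e). Then (X₀, y₀) ∈ D and G_t(X₀, y₀) = t·∑_{i=1}^n (y₀)ᵢ − n + d·ln(d²/(k(d−k))) ≤ t·∑_{i=1}^n (y₀)ᵢ − n + 2d·ln d. -/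

import Mathlib

open Matrix

/-- The Euclidean (ℓ₂) norm of a vector in ℝ^d. -/
noncomputable def l2norm {d : ℕ} (u : Fin d → ℝ) : ℝ := Real.sqrt (∑ j, (u j) ^ 2)

/-- The barrier objective
`G_t(X,y) = t·∑ᵢ yᵢ − ∑ᵢ ln(yᵢ² − ‖X pᵢ‖₂²) − ln det X − ln det (I − X)`. -/
noncomputable def barrierG {n d : ℕ} (p : Fin n → Fin d → ℝ) (t : ℝ)
    (X : Matrix (Fin d) (Fin d) ℝ) (y : Fin n → ℝ) : ℝ :=
  t * ∑ i, y i - ∑ i, Real.log ((y i) ^ 2 - (l2norm (X.mulVec (p i))) ^ 2)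
    - Real.log X.det - Real.log (1 - X).det

/-- The domain `D` of the barrier problem: `X` symmetric with `trace X = d − k`,
`0 ≺ X ≺ I`, and `‖X pᵢ‖₂ < yᵢ` for every `i`. -/
def barrierDom {n d : ℕ} (k : ℕ) (p : Fin n → Fin d → ℝ)
    (X : Matrix (Fin d) (Fin d) ℝ) (y : Fin n → ℝ) : Prop :=
  Xᵀ = X ∧ X.trace = ((d - k : ℕ) : ℝ) ∧ X.PosDef ∧ (1 - X).PosDef ∧
    ∀ i, l2norm (X.mulVec (p i)) < y i

/-! At the scalar matrix `X₀ = c·I`, `c = (d−k)/d`, every constraint of `D` is immediate, and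
`y₀` is chosen so that each `ln(y₀ᵢ² − ‖X₀ pᵢ‖²) = ln e = 1`. What remains is
`ln det X₀ + ln det (I − X₀) = d·ln(c(1−c)) = −d·ln(d²/(k(d−k)))`, and `k(d−k) ≥ 1`
for integers `1 ≤ k < d` gives the bound by `2d·ln d`. -/

open Real

theorem l2norm_nonneg {d : ℕ} (u : Fin d → ℝ) : 0 ≤ l2norm u := sqrt_nonneg _

theorem lt_sqrt_sq_add {x a : ℝ} (hx : 0 ≤ x) (ha : 0 < a) : x < √(x ^ 2 + a) :=
  (lt_sqrt hx).2 (by linarith)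

theorem sqrt_sq_add_sq_sub_sq (x : ℝ) {a : ℝ} (ha : 0 ≤ a) :
    √(x ^ 2 + a) ^ 2 - x ^ 2 = a := by
  rw [sq_sqrt (by positivity)]
  ring

theorem one_sub_smul_one {d : ℕ} (c : ℝ) :
    (1 : Matrix (Fin d) (Fin d) ℝ) - c • 1 = (1 - c) • 1 := by
  rw [sub_smul, one_smul]

section ScalarMatrix

variable {n d : ℕ} (p : Fin n → Fin d → ℝ) {c : ℝ} {y : Fin n → ℝ}

theorem barrierDom_smul_one {k : ℕ} (hc0 : 0 < c) (hc1 : c < 1)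
    (htrace : c * d = ((d - k : ℕ) : ℝ))
    (hy : ∀ i, l2norm ((c • 1 : Matrix (Fin d) (Fin d) ℝ) *ᵥ p i) < y i) :
    barrierDom k p (c • 1) y := by
  refine ⟨by simp, ?_, PosDef.one.smul hc0, ?_, hy⟩
  · simpa [trace_smul] using htrace
  · rw [one_sub_smul_one]
    exact PosDef.one.smul (sub_pos.2 hc1)

theorem barrierG_smul_one (t : ℝ)
    (hy : ∀ i, y i ^ 2 - l2norm ((c • 1 : Matrix (Fin d) (Fin d) ℝ) *ᵥ p i) ^ 2 = exp 1) :
    barrierG p t (c • 1) y = t * ∑ i, y i - n - d * (log c + log (1 - c)) := by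
  simp only [barrierG, hy, log_exp, one_sub_smul_one, det_smul, det_one, mul_one,
    Fintype.card_fin, log_pow, Finset.sum_const, Finset.card_univ, nsmul_eq_mul]
  ring

end ScalarMatrix

theorem log_add_log_one_sub_div {d k : ℝ} (hk : 0 < k) (hkd : k < d) :
    log ((d - k) / d) + log (1 - (d - k) / d) = -log (d ^ 2 / (k * (d - k))) := by
  have hd : 0 < d := hk.trans hkd
  have hdk : 0 < d - k := sub_pos.2 hkd
  have hone_sub : 1 - (d - k) / d = k / d := by field_simp; ring
  rw [hone_sub, ← log_mul (by positivity) (by positivity), ← log_inv]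
  congr 1
  field_simp

theorem log_sq_div_mul_sub_le {d k : ℕ} (hk : 1 ≤ k) (hkd : k < d) :
    log ((d : ℝ) ^ 2 / (k * ((d : ℝ) - k))) ≤ 2 * log d := by
  have hk' : (1 : ℝ) ≤ k := by exact_mod_cast hk
  have hdk : (1 : ℝ) ≤ d - k := by
    have : (k : ℝ) + 1 ≤ d := by exact_mod_cast hkd
    linarith
  have hd : (0 : ℝ) < d := by linarith
  calc log ((d : ℝ) ^ 2 / (k * ((d : ℝ) - k))) ≤ log ((d : ℝ) ^ 2) :=
        log_le_log (by positivity) <|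
          div_le_self (by positivity) (one_le_mul_of_one_le_of_one_le hk' hdk)
    _ = 2 * log d := by rw [log_pow]; push_cast; ring

theorem stmt_15_general (n d k : ℕ) (hk1 : 1 ≤ k) (hk2 : k ≤ d - 1)
    (p : Fin n → Fin d → ℝ) (t : ℝ)
    (X₀ : Matrix (Fin d) (Fin d) ℝ)
    (hX₀ : X₀ = (((d : ℝ) - k) / d) • (1 : Matrix (Fin d) (Fin d) ℝ))
    (y₀ : Fin n → ℝ)
    (hy₀ : ∀ i, y₀ i = Real.sqrt ((l2norm (X₀.mulVec (p i))) ^ 2 + Real.exp 1)) :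
    barrierDom k p X₀ y₀ ∧
    barrierG p t X₀ y₀
      = t * ∑ i, y₀ i - (n : ℝ)
        + (d : ℝ) * Real.log ((d : ℝ) ^ 2 / (k * ((d : ℝ) - k))) ∧
    barrierG p t X₀ y₀
      ≤ t * ∑ i, y₀ i - (n : ℝ) + 2 * (d : ℝ) * Real.log d := by
  have hkd : k < d := by omega
  have hk : (0 : ℝ) < k := by exact_mod_cast hk1
  have hkd' : (k : ℝ) < d := by exact_mod_cast hkd
  have hd : (0 : ℝ) < d := hk.trans hkd'
  subst hX₀
  have hG := barrierG_smul_one p (c := ((d : ℝ) - k) / d) (y := y₀) t fun i ↦ by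
    rw [hy₀ i]
    exact sqrt_sq_add_sq_sub_sq _ (exp_pos 1).le
  rw [log_add_log_one_sub_div hk hkd'] at hG
  refine ⟨barrierDom_smul_one p (by positivity) ?_ ?_ fun i ↦ ?_, by rw [hG]; ring, ?_⟩
  · rw [div_lt_one hd]
    linarith
  · rw [Nat.cast_sub hkd.le]
    field_simp
  · rw [hy₀ i]
    exact lt_sqrt_sq_add (l2norm_nonneg _) (exp_pos 1)
  · rw [hG]
    linarith [mul_le_mul_of_nonneg_left (log_sq_div_mul_sub_le hk1 hkd) hd.le]

/-- With `X₀ := ((d−k)/d)·I` and `(y₀)ᵢ := √(‖X₀ pᵢ‖₂² + e)`, the pair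
`(X₀, y₀)` belongs to the domain `D` and
`G_t(X₀,y₀) = t·∑ᵢ (y₀)ᵢ − n + d·ln(d²/(k(d−k))) ≤ t·∑ᵢ (y₀)ᵢ − n + 2d·ln d`. -/
theorem stmt_15 (n d k : ℕ) (hn : 1 ≤ n) (hd : 2 ≤ d) (hk1 : 1 ≤ k) (hk2 : k ≤ d - 1)
    (p : Fin n → Fin d → ℝ) (t : ℝ) (ht : 0 < t)
    (X₀ : Matrix (Fin d) (Fin d) ℝ)
    (hX₀ : X₀ = (((d : ℝ) - k) / d) • (1 : Matrix (Fin d) (Fin d) ℝ))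
    (y₀ : Fin n → ℝ)
    (hy₀ : ∀ i, y₀ i = Real.sqrt ((l2norm (X₀.mulVec (p i))) ^ 2 + Real.exp 1)) :
    barrierDom k p X₀ y₀ ∧
    barrierG p t X₀ y₀
      = t * ∑ i, y₀ i - (n : ℝ)
        + (d : ℝ) * Real.log ((d : ℝ) ^ 2 / (k * ((d : ℝ) - k))) ∧
    barrierG p t X₀ y₀
      ≤ t * ∑ i, y₀ i - (n : ℝ) + 2 * (d : ℝ) * Real.log d :=
  stmt_15_general n d k hk1 hk2 p t X₀ hX₀ y₀ hy₀
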